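/- Let Y ∈ {0,1}^{n×m} be a binary matrix whose column-sum vector r = Yᵀe satisfies the power law r_g = r_max · g^(−α) for g = 1,…,m with r_max > 0 and α > 1, and let (σ1, p1, q1) be a principal singular triple of Y with p1 entrywise nonnegative. Then cos(r, q1) ≥ σ1 · ⟨e, p1⟩ / (r_max · √ζ(2α)). -/

import Mathlib

open Matrix

/-- Riemann zeta function for real `s > 1`: `ζ(s) = ∑_{j=1}^∞ j^(−s)`. -/
noncomputable def zetaR (s : ℝ) : ℝ := ∑' j : ℕ, ((j : ℝ) + 1) ^ (-s)

/-- Euclidean (L2) norm of a vector. -/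
noncomputable def enorm {k : ℕ} (v : Fin k → ℝ) : ℝ := Real.sqrt (∑ i, v i ^ 2)

/-- Cosine similarity of two vectors. -/
noncomputable def vcos {k : ℕ} (x y : Fin k → ℝ) : ℝ :=
  (∑ i, x i * y i) / (_root_.enorm x * _root_.enorm y)

/-! The numerator `⟨r, q₁⟩ = ⟨e, Y q₁⟩ = σ₁ ⟨e, p₁⟩` is exact, while the power law bounds
`‖r‖² = r_max² ∑_{g ≤ m} g^(−2α)` by the full series `r_max² ζ(2α)`. -/

theorem eq_zero_of_enorm_eq_zero {k : ℕ} {x : Fin k → ℝ} (hx : _root_.enorm x = 0) : x = 0 := by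
  have hsum : ∑ i, x i ^ 2 = 0 :=
    le_antisymm (Real.sqrt_eq_zero'.mp hx) (Finset.sum_nonneg fun i _ => sq_nonneg (x i))
  funext i
  exact pow_eq_zero_iff two_ne_zero |>.mp <|
    (Finset.sum_eq_zero_iff_of_nonneg fun j _ => sq_nonneg (x j)).mp hsum i (Finset.mem_univ i)

theorem div_le_vcos_of_enorm_le {k : ℕ} {x y : Fin k → ℝ} {B : ℝ} (hy : _root_.enorm y = 1)
    (hxy : 0 ≤ ∑ i, x i * y i) (hxB : _root_.enorm x ≤ B) :
    (∑ i, x i * y i) / B ≤ vcos x y := by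
  rw [vcos, hy, mul_one]
  rcases (Real.sqrt_nonneg _ : 0 ≤ _root_.enorm x).eq_or_lt with hx | hx
  · simp [eq_zero_of_enorm_eq_zero hx.symm]
  · exact div_le_div_of_nonneg_left hxy hx hxB

theorem sum_colSum_mul_eq_sum_mulVec {n m : ℕ} (Y : Matrix (Fin n) (Fin m) ℝ) (q : Fin m → ℝ) :
    ∑ i, (Yᵀ *ᵥ fun _ => 1) i * q i = ∑ u, (Y *ᵥ q) u := by
  have h := (dotProduct_mulVec (fun _ => (1 : ℝ)) Y q).symm
  rw [← mulVec_transpose] at h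
  simpa [dotProduct] using h

theorem sum_fin_rpow_neg_le_zetaR (m : ℕ) {s : ℝ} (hs : 1 < s) :
    ∑ i : Fin m, (((i : ℕ) : ℝ) + 1) ^ (-s) ≤ zetaR s := by
  have hsum : Summable fun j : ℕ => ((j : ℝ) + 1) ^ (-s) := by
    simpa using (summable_nat_add_iff 1).mpr (Real.summable_nat_rpow.mpr (neg_lt_neg hs))
  rw [Fin.sum_univ_eq_sum_range (fun j => ((j : ℝ) + 1) ^ (-s))]
  exact hsum.sum_le_tsum _ (fun j _ => by positivity)

theorem enorm_powerLaw_le {m : ℕ} {c α : ℝ} (hc : 0 ≤ c) (hα : 1 < 2 * α) :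
    _root_.enorm (fun g : Fin m => c * (((g : ℕ) : ℝ) + 1) ^ (-α)) ≤
      c * Real.sqrt (zetaR (2 * α)) := by
  have hsq : ∀ g : Fin m, (c * (((g : ℕ) : ℝ) + 1) ^ (-α)) ^ 2 =
      c ^ 2 * (((g : ℕ) : ℝ) + 1) ^ (-(2 * α)) := by
    intro g
    rw [mul_pow, sq ((((g : ℕ) : ℝ) + 1) ^ (-α)), ← Real.rpow_add (by positivity)]
    ring_nf
  have hsum : ∑ g : Fin m, (c * (((g : ℕ) : ℝ) + 1) ^ (-α)) ^ 2 ≤ c ^ 2 * zetaR (2 * α) := by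
    simp only [hsq, ← Finset.mul_sum]
    exact mul_le_mul_of_nonneg_left (sum_fin_rpow_neg_le_zetaR m hα) (sq_nonneg c)
  calc _root_.enorm (fun g : Fin m => c * (((g : ℕ) : ℝ) + 1) ^ (-α))
      ≤ Real.sqrt (c ^ 2 * zetaR (2 * α)) := Real.sqrt_le_sqrt hsum
    _ = c * Real.sqrt (zetaR (2 * α)) := by rw [Real.sqrt_mul (sq_nonneg c), Real.sqrt_sq hc]

theorem cos_r_q1_lower_bound_general
    (n m : ℕ) (Y : Matrix (Fin n) (Fin m) ℝ)
    (α rmax : ℝ) (hα : 1 < α) (hrmax : 0 < rmax)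
    (r : Fin m → ℝ) (hrdef : r = Yᵀ.mulVec (fun _ => 1))
    (hpow : ∀ g : Fin m, r g = rmax * (((g : ℕ) : ℝ) + 1) ^ (-α))
    (σ1 : ℝ) (p1 : Fin n → ℝ) (q1 : Fin m → ℝ)
    (hσnn : 0 ≤ σ1)
    (hq1 : _root_.enorm q1 = 1)
    (hYq : Y.mulVec q1 = σ1 • p1)
    (hpnn : ∀ u, 0 ≤ p1 u) :
    vcos r q1 ≥ σ1 * (∑ u, p1 u) / (rmax * Real.sqrt (zetaR (2 * α))) := by
  have hnum : ∑ i, r i * q1 i = σ1 * ∑ u, p1 u := by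
    rw [hrdef, sum_colSum_mul_eq_sum_mulVec, hYq, Finset.mul_sum]
    simp only [Pi.smul_apply, smul_eq_mul]
  have hnorm : _root_.enorm r ≤ rmax * Real.sqrt (zetaR (2 * α)) := by
    rw [funext hpow]
    exact enorm_powerLaw_le hrmax.le (by linarith)
  have hnum_nonneg : 0 ≤ ∑ i, r i * q1 i :=
    hnum ▸ mul_nonneg hσnn (Finset.sum_nonneg fun u _ => hpnn u)
  rw [ge_iff_le, ← hnum]
  exact div_le_vcos_of_enorm_le hq1 hnum_nonneg hnorm

/-- Let `Y ∈ {0,1}^{n×m}` be a binary matrix whose column-sum vector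
`r = Yᵀe` satisfies the power law `r_g = r_max · g^(−α)` with `r_max > 0` and `α > 1`,
and let `(σ1, p1, q1)` be a principal singular triple of `Y` with `p1` entrywise
nonnegative.  Then `cos(r, q1) ≥ σ1 · ⟨e, p1⟩ / (r_max · √ζ(2α))`. -/
theorem cos_r_q1_lower_bound
    (n m : ℕ) (Y : Matrix (Fin n) (Fin m) ℝ)
    (hbin : ∀ u i, Y u i = 0 ∨ Y u i = 1)
    (α rmax : ℝ) (hα : 1 < α) (hrmax : 0 < rmax)
    (r : Fin m → ℝ) (hrdef : r = Yᵀ.mulVec (fun _ => 1))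
    (hpow : ∀ g : Fin m, r g = rmax * (((g : ℕ) : ℝ) + 1) ^ (-α))
    (σ1 : ℝ) (p1 : Fin n → ℝ) (q1 : Fin m → ℝ)
    (hσnn : 0 ≤ σ1)
    (hop : ∀ q : Fin m → ℝ, _root_.enorm q = 1 → _root_.enorm (Y.mulVec q) ≤ σ1)
    (hp1 : _root_.enorm p1 = 1) (hq1 : _root_.enorm q1 = 1)
    (hYq : Y.mulVec q1 = σ1 • p1) (hYp : Yᵀ.mulVec p1 = σ1 • q1)
    (hpnn : ∀ u, 0 ≤ p1 u) :
    vcos r q1 ≥ σ1 * (∑ u, p1 u) / (rmax * Real.sqrt (zetaR (2 * α))) :=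
  cos_r_q1_lower_bound_general n m Y α rmax hα hrmax r hrdef hpow σ1 p1 q1 hσnn hq1 hYq hpnn
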